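/- Let θ be a CPWL function and let x̄, v̄, Ψ, Λ(x̄) be as in the variational-system setting with v̄ ∈ Λ(x̄). If ⟨∇ₓΨ(x̄,v̄)u, u⟩ > 0 for every u ≠ 0 with ∇Φ(x̄)u ∈ 𝒦(z̄,v̄), then v̄ is a noncritical multiplier. -/

import Mathlib

open Filter Topology Set RealInnerProductSpace

noncomputable section

abbrev Ev (k : ℕ) := EuclideanSpace ℝ (Fin k)

/-- The Bouligand–Severi tangent cone to a set `s` at `x`. -/
def tcone {E : Type*} [NormedAddCommGroup E] [NormedSpace ℝ E] (s : Set E) (x : E) : Set E :=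
  {w | ∃ (z : ℕ → E) (c : ℕ → ℝ), (∀ k, z k ∈ s) ∧ (∀ k, 0 ≤ c k) ∧
      Tendsto z atTop (𝓝 x) ∧ Tendsto (fun k => c k • (z k - x)) atTop (𝓝 w)}

/-- The data of a convex piecewise linear (CPWL) extended-real-valued function on `ℝ^m`:
`θ(z) = max_i (⟨a i, z⟩ - al i)` on the polyhedron `dom θ = {z | ⟨d i, z⟩ ≤ be i ∀ i}`,
and `θ(z) = +∞` outside of it. -/
structure CPWL (m : ℕ) where
  l : ℕ
  p : ℕ
  hl : 0 < l
  a : Fin l → Ev m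
  al : Fin l → ℝ
  d : Fin p → Ev m
  be : Fin p → ℝ
  dom_nonempty : ∃ z : Ev m, ∀ i, ⟪d i, z⟫ ≤ be i

namespace CPWL

variable {m : ℕ} (θ : CPWL m)

/-- The (polyhedral) domain of the CPWL function. -/
def dom : Set (Ev m) := {z | ∀ i, ⟪θ.d i, z⟫ ≤ θ.be i}

/-- The real value `max_i (⟨a i, z⟩ - al i)` of the CPWL function (meaningful on its domain). -/
def val (z : Ev m) : ℝ := ⨆ i : Fin θ.l, (⟪θ.a i, z⟫ - θ.al i)

/-- The CPWL function as an extended-real-valued function. -/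
def eval (z : Ev m) : EReal :=
  @ite _ (z ∈ θ.dom) (Classical.propDecidable _) ((θ.val z : ℝ) : EReal) ⊤

/-- The subdifferential (of convex analysis) of the CPWL function. -/
def subdiff (z : Ev m) : Set (Ev m) :=
  {v | z ∈ θ.dom ∧ ∀ z' ∈ θ.dom, ⟪v, z' - z⟫ ≤ θ.val z' - θ.val z}

/-- Active indices `K(z)` of the max-representation. -/
def Kact (z : Ev m) : Set (Fin θ.l) := {i | θ.val z = ⟪θ.a i, z⟫ - θ.al i}

/-- Active indices `I(z)` of the domain constraints. -/
def Iact (z : Ev m) : Set (Fin θ.p) := {i | ⟪θ.d i, z⟫ = θ.be i}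

/-- The critical cone `𝒦(z̄,v̄) = {w ∈ T(z̄; dom θ) : ⟨v̄,w⟩ = θ′(z̄;w)}`. -/
def crit (zb vb : Ev m) : Set (Ev m) :=
  {w | w ∈ tcone θ.dom zb ∧
    Tendsto (fun t : ℝ => (θ.val (zb + t • w) - θ.val zb) / t) (𝓝[>] (0 : ℝ))
      (𝓝 ⟪vb, w⟫)}

/-- The graph of the subdifferential mapping. -/
def gph : Set (Ev m × Ev m) := {zv | zv.2 ∈ θ.subdiff zv.1}

/-- The graphical derivative `(D∂θ)(z̄,v̄)(u)`. -/
def Dsub (zb vb u : Ev m) : Set (Ev m) := {w | (u, w) ∈ tcone θ.gph (zb, vb)}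

/-- The regular coderivative `(D̂*∂θ)(z̄,v̄)(u)`. -/
def Dhat (zb vb u : Ev m) : Set (Ev m) :=
  {w | ∀ h ∈ tcone θ.gph (zb, vb), ⟪w, h.1⟫ - ⟪u, h.2⟫ ≤ 0}

end CPWL

section VarSys

variable {n m : ℕ}

/-- The adjoint `∇Φ(x)*` of the Jacobian of `Φ` at `x`. -/
def adjD (Φ : Ev n → Ev m) (x : Ev n) : Ev m →L[ℝ] Ev n :=
  ContinuousLinearMap.adjoint (fderiv ℝ Φ x)

/-- `Ψ(x,v) = f(x) + ∇Φ(x)* v`. -/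
def Psi (f : Ev n → Ev n) (Φ : Ev n → Ev m) (x : Ev n) (v : Ev m) : Ev n :=
  f x + adjD Φ x v

/-- The partial Jacobian `∇ₓΨ(x̄,v̄)`. -/
def gradxPsi (f : Ev n → Ev n) (Φ : Ev n → Ev m) (xb : Ev n) (vb : Ev m) :
    Ev n →L[ℝ] Ev n :=
  fderiv ℝ (fun x => Psi f Φ x vb) xb

/-- The Lagrange multiplier set `Λ(x̄)` of the variational system. -/
def Lam (f : Ev n → Ev n) (Φ : Ev n → Ev m) (θ : CPWL m) (xb : Ev n) : Set (Ev m) :=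
  {v | Psi f Φ xb v = 0 ∧ v ∈ θ.subdiff (Φ xb)}

/-- `v̄` is a critical multiplier for the variational system. -/
def IsCritical (f : Ev n → Ev n) (Φ : Ev n → Ev m) (θ : CPWL m) (xb : Ev n) (vb : Ev m) :
    Prop :=
  ∃ ξ : Ev n, ξ ≠ 0 ∧ ∃ w ∈ θ.Dsub (Φ xb) vb (fderiv ℝ Φ xb ξ),
    gradxPsi f Φ xb vb ξ + adjD Φ xb w = 0

/-- The solution map of the canonically perturbed variational system. -/
def Smap (f : Ev n → Ev n) (Φ : Ev n → Ev m) (θ : CPWL m) (p₁ : Ev n) (p₂ : Ev m) :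
    Set (Ev n × Ev m) :=
  {xv | Psi f Φ xv.1 xv.2 = p₁ ∧ xv.2 ∈ θ.subdiff (Φ xv.1 + p₂)}

end VarSys

section General

variable {n m : ℕ}

/-- The subdifferential of a general extended-real-valued function. -/
def subdiffE (θ : Ev m → EReal) (z : Ev m) : Set (Ev m) :=
  {v | ∀ z', ((⟪v, z' - z⟫ : ℝ) : EReal) ≤ θ z' - θ z}

/-- The graph of the subdifferential of a general extended-real-valued function. -/
def gphE (θ : Ev m → EReal) : Set (Ev m × Ev m) := {zv | zv.2 ∈ subdiffE θ zv.1}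

/-- The graphical derivative of the subdifferential, general case. -/
def DsubE (θ : Ev m → EReal) (zb vb u : Ev m) : Set (Ev m) :=
  {w | (u, w) ∈ tcone (gphE θ) (zb, vb)}

/-- The Lagrange multiplier set, general case. -/
def LamE (f : Ev n → Ev n) (Φ : Ev n → Ev m) (θ : Ev m → EReal) (xb : Ev n) :
    Set (Ev m) :=
  {v | Psi f Φ xb v = 0 ∧ v ∈ subdiffE θ (Φ xb)}

/-- The solution map of the canonically perturbed variational system, general case. -/
def SmapE (f : Ev n → Ev n) (Φ : Ev n → Ev m) (θ : Ev m → EReal) (p₁ : Ev n)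
    (p₂ : Ev m) : Set (Ev n × Ev m) :=
  {xv | Psi f Φ xv.1 xv.2 = p₁ ∧ xv.2 ∈ subdiffE θ (Φ xv.1 + p₂)}

end General

section Composite

variable {n m : ℕ}

/-- The gradient `∇ₓL(·,v)` of the Lagrangian `L(x,v) = φ₀(x) + ⟨Φ(x),v⟩`. -/
def gradL (φ₀ : Ev n → ℝ) (Φ : Ev n → Ev m) (v : Ev m) (x : Ev n) : Ev n :=
  gradient (fun y => φ₀ y + ⟪Φ y, v⟫) x

/-- The Hessian `∇²ₓₓL(x̄,v)` as a linear operator. -/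
def HessOp (φ₀ : Ev n → ℝ) (Φ : Ev n → Ev m) (v : Ev m) (xb : Ev n) : Ev n →L[ℝ] Ev n :=
  fderiv ℝ (gradL φ₀ Φ v) xb

/-- The Lagrange multiplier set `Λ_com(x̄)` of the composite optimization problem. -/
def LamCom (φ₀ : Ev n → ℝ) (Φ : Ev n → Ev m) (θ : CPWL m) (xb : Ev n) : Set (Ev m) :=
  {v | gradient φ₀ xb + adjD Φ xb v = 0 ∧ v ∈ θ.subdiff (Φ xb)}

/-- Criticality of a multiplier in the composite optimization setting. -/
def IsCriticalCom (φ₀ : Ev n → ℝ) (Φ : Ev n → Ev m) (θ : CPWL m) (xb : Ev n) (v : Ev m) :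
    Prop :=
  ∃ ξ : Ev n, ξ ≠ 0 ∧ ∃ w ∈ θ.Dsub (Φ xb) v (fderiv ℝ Φ xb ξ),
    HessOp φ₀ Φ v xb ξ + adjD Φ xb w = 0

/-- The solution map of the canonically perturbed KKT system of composite optimization. -/
def SKKT (φ₀ : Ev n → ℝ) (Φ : Ev n → Ev m) (θ : CPWL m) (p₁ : Ev n) (p₂ : Ev m) :
    Set (Ev n × Ev m) :=
  {xv | gradient φ₀ xv.1 + adjD Φ xv.1 xv.2 = p₁ ∧ xv.2 ∈ θ.subdiff (Φ xv.1 + p₂)}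

/-- `x̄` is a local minimizer of `φ₀ + θ∘Φ`. -/
def LocalMin (φ₀ : Ev n → ℝ) (Φ : Ev n → Ev m) (θ : CPWL m) (xb : Ev n) : Prop :=
  ∃ U ∈ 𝓝 xb, ∀ x ∈ U,
    ((φ₀ xb : ℝ) : EReal) + θ.eval (Φ xb) ≤ ((φ₀ x : ℝ) : EReal) + θ.eval (Φ x)

end Composite

section Calmness

variable {n m : ℕ}

/-- Isolated calmness of a solution map at `((0,0), q0)`. -/
def IsolCalm (S : Ev n × Ev m → Set (Ev n × Ev m)) (q0 : Ev n × Ev m) : Prop :=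
  ∃ c : ℝ, 0 ≤ c ∧ ∃ U ∈ 𝓝 (0 : Ev n × Ev m), ∃ V ∈ 𝓝 q0,
    ∀ p ∈ U, ∀ q ∈ S p ∩ V, ‖q - q0‖ ≤ c * (‖p.1‖ + ‖p.2‖)

/-- Robust isolated calmness of a solution map at `((0,0), q0)`. -/
def RobustIsolCalm (S : Ev n × Ev m → Set (Ev n × Ev m)) (q0 : Ev n × Ev m) : Prop :=
  ∃ c : ℝ, 0 ≤ c ∧ ∃ U ∈ 𝓝 (0 : Ev n × Ev m), ∃ V ∈ 𝓝 q0,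
    (∀ p ∈ U, ∀ q ∈ S p ∩ V, ‖q - q0‖ ≤ c * (‖p.1‖ + ‖p.2‖)) ∧
    (∀ p ∈ U, (S p ∩ V).Nonempty)

/-- The Lipschitz-like (Aubin) property of a solution map around `((0,0), q0)`. -/
def LipschitzLike (S : Ev n × Ev m → Set (Ev n × Ev m)) (q0 : Ev n × Ev m) : Prop :=
  ∃ c : ℝ, 0 ≤ c ∧ ∃ U ∈ 𝓝 (0 : Ev n × Ev m), ∃ V ∈ 𝓝 q0,
    ∀ p ∈ U, ∀ p' ∈ U, ∀ q ∈ S p ∩ V, ∃ q' ∈ S p', ‖q - q'‖ ≤ c * ‖p - p'‖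

end Calmness

/-!
Let `(u, w)` be tangent to `gph ∂θ` at `(z̄, v̄)`. Since `∂θ` is monotone, `⟪u, w⟫ ≥ 0`. Since
`θ` is piecewise linear, `θ(z̄ + h) = θ(z̄) + θ'(z̄; h)` for all small `h`, where
`θ'(z̄; h) = max_{i ∈ K(z̄)} ⟪aᵢ, h⟫`; passing to the limit along the sequences defining the
tangent vector gives `θ'(z̄; u) = ⟪v̄, u⟫`, i.e. `u ∈ 𝒦(z̄, v̄)`.

If `ξ ≠ 0` and `w ∈ (D∂θ)(z̄, v̄)(∇Φ(x̄)ξ)` solve `∇ₓΨ(x̄, v̄)ξ + ∇Φ(x̄)* w = 0`, then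
`⟪∇ₓΨ(x̄, v̄)ξ, ξ⟫ = -⟪∇Φ(x̄)ξ, w⟫ ≤ 0` while `∇Φ(x̄)ξ ∈ 𝒦(z̄, v̄)`, contradicting the
second-order condition.
-/

lemma continuous_ciSup_of_finite {ι X L : Type*} [TopologicalSpace X]
    [ConditionallyCompleteLattice L] [TopologicalSpace L] [ContinuousSup L] [Finite ι] [Nonempty ι]
    {f : ι → X → L} (hf : ∀ i, Continuous (f i)) : Continuous fun x => ⨆ i, f i x := by
  have := Fintype.ofFinite ι
  simp_rw [← Finset.sup'_univ_eq_ciSup]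
  exact continuous_iff_continuousAt.2 fun x =>
    ContinuousAt.finset_sup'_apply _ fun i _ => (hf i).continuousAt

section TangentCone

variable {E F : Type*} [NormedAddCommGroup E] [NormedSpace ℝ E]
  [NormedAddCommGroup F] [NormedSpace ℝ F]

lemma tcone_mono {s t : Set E} (hst : s ⊆ t) (x : E) : tcone s x ⊆ tcone t x :=
  fun _ ⟨z, c, hz, hc, hzx, hq⟩ => ⟨z, c, fun k => hst (hz k), hc, hzx, hq⟩

lemma map_mem_tcone_image (L : E →L[ℝ] F) {s : Set E} {x w : E} (hw : w ∈ tcone s x) :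
    L w ∈ tcone (L '' s) (L x) := by
  obtain ⟨z, c, hz, hc, hzx, hq⟩ := hw
  refine ⟨fun k => L (z k), c, fun k => mem_image_of_mem L (hz k), hc,
    (L.continuous.tendsto x).comp hzx, ?_⟩
  simpa only [Function.comp_def, map_smul, map_sub] using (L.continuous.tendsto w).comp hq

end TangentCone

lemma inner_nonneg_of_mem_tcone_of_monotone {E : Type*} [NormedAddCommGroup E]
    [InnerProductSpace ℝ E] {S : Set (E × E)} {x : E × E}
    (hS : ∀ p ∈ S, 0 ≤ ⟪p.1 - x.1, p.2 - x.2⟫) {h : E × E} (hh : h ∈ tcone S x) :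
    0 ≤ ⟪h.1, h.2⟫ := by
  obtain ⟨z, c, hz, hc, -, hq⟩ := hh
  refine ge_of_tendsto' (hq.fst_nhds.inner hq.snd_nhds) fun k => ?_
  simp only [Prod.smul_fst, Prod.smul_snd, Prod.fst_sub, Prod.snd_sub, real_inner_smul_left,
    real_inner_smul_right, ← mul_assoc]
  exact mul_nonneg (mul_nonneg (hc k) (hc k)) (hS _ (hz k))

namespace CPWL

variable {m : ℕ} (θ : CPWL m)

instance : Nonempty (Fin θ.l) := ⟨⟨0, θ.hl⟩⟩

lemma le_val (i : Fin θ.l) (z : Ev m) : ⟪θ.a i, z⟫ - θ.al i ≤ θ.val z :=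
  le_ciSup (f := fun i => ⟪θ.a i, z⟫ - θ.al i) (finite_range _).bddAbove i

lemma Kact_nonempty (z : Ev m) : (θ.Kact z).Nonempty := by
  obtain ⟨i, hi⟩ := Finite.exists_max fun i => ⟪θ.a i, z⟫ - θ.al i
  exact ⟨i, le_antisymm (ciSup_le hi) (θ.le_val i z)⟩

instance (z : Ev m) : Nonempty (θ.Kact z) := (θ.Kact_nonempty z).to_subtype

variable {θ}

lemma inner_sub_le_val_sub {z : Ev m} {i : Fin θ.l} (hi : i ∈ θ.Kact z) (z' : Ev m) :
    ⟪θ.a i, z' - z⟫ ≤ θ.val z' - θ.val z := by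
  have hi : θ.val z = ⟪θ.a i, z⟫ - θ.al i := hi
  rw [inner_sub_right]
  linarith [θ.le_val i z']

lemma inner_sub_nonneg_of_mem_subdiff {z z' v v' : Ev m} (hv : v ∈ θ.subdiff z)
    (hv' : v' ∈ θ.subdiff z') : 0 ≤ ⟪z - z', v - v'⟫ := by
  have h := hv.2 z' hv'.1
  have h' := hv'.2 z hv.1
  simp only [inner_sub_left, inner_sub_right, real_inner_comm z, real_inner_comm z'] at h h' ⊢
  linarith

variable (θ)

/-- The directional derivative `θ'(z; h)` of the max-representation `θ.val`. -/
def dirDeriv (z h : Ev m) : ℝ := ⨆ i : θ.Kact z, ⟪θ.a i, h⟫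

lemma continuous_dirDeriv (z : Ev m) : Continuous (θ.dirDeriv z) :=
  continuous_ciSup_of_finite fun _ => continuous_const.inner continuous_id

variable {θ}

lemma inner_le_dirDeriv {z : Ev m} {i : Fin θ.l} (hi : i ∈ θ.Kact z) (h : Ev m) :
    ⟪θ.a i, h⟫ ≤ θ.dirDeriv z h :=
  le_ciSup (f := fun i : θ.Kact z => ⟪θ.a i, h⟫) (finite_range _).bddAbove ⟨i, hi⟩

lemma dirDeriv_smul {c : ℝ} (hc : 0 ≤ c) (z h : Ev m) :
    θ.dirDeriv z (c • h) = c * θ.dirDeriv z h := by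
  simp_rw [dirDeriv, real_inner_smul_right]
  exact (Real.mul_iSup_of_nonneg hc _).symm

lemma dirDeriv_zero (z : Ev m) : θ.dirDeriv z 0 = 0 := by
  simpa using dirDeriv_smul le_rfl z (0 : Ev m)

variable (θ)

lemma val_add_dirDeriv_le (z h : Ev m) : θ.val z + θ.dirDeriv z h ≤ θ.val (z + h) := by
  rw [← le_sub_iff_add_le']
  refine ciSup_le fun i => ?_
  simpa using inner_sub_le_val_sub i.2 (z + h)

lemma eventually_val_add_le (z : Ev m) :
    ∀ᶠ h in 𝓝 0, θ.val (z + h) ≤ θ.val z + θ.dirDeriv z h := by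
  suffices ∀ i, ∀ᶠ h in 𝓝 0, ⟪θ.a i, z + h⟫ - θ.al i ≤ θ.val z + θ.dirDeriv z h by
    filter_upwards [eventually_all.2 this] with h hh using ciSup_le hh
  intro i
  by_cases hi : i ∈ θ.Kact z
  · refine Eventually.of_forall fun h => ?_
    have hi' : θ.val z = ⟪θ.a i, z⟫ - θ.al i := hi
    rw [inner_add_right, hi']
    linarith [inner_le_dirDeriv hi h]
  · -- an inactive piece stays strictly below `θ` near `z`, by continuity
    have hlt : ⟪θ.a i, z + 0⟫ - θ.al i < θ.val z + θ.dirDeriv z 0 := by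
      rw [add_zero, dirDeriv_zero, add_zero]
      exact lt_of_le_of_ne (θ.le_val i z) fun e => hi e.symm
    have hcont : Continuous fun h => ⟪θ.a i, z + h⟫ - θ.al i := by fun_prop
    filter_upwards [hcont.continuousAt.eventually_lt
      (continuous_const.add (θ.continuous_dirDeriv z)).continuousAt hlt] with h hh using hh.le

lemma eventually_val_add_eq (z : Ev m) :
    ∀ᶠ h in 𝓝 0, θ.val (z + h) = θ.val z + θ.dirDeriv z h :=
  (θ.eventually_val_add_le z).mono fun h hh => le_antisymm hh (θ.val_add_dirDeriv_le z h)

lemma tendsto_val_slope (z u : Ev m) :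
    Tendsto (fun t : ℝ => (θ.val (z + t • u) - θ.val z) / t) (𝓝[>] 0)
      (𝓝 (θ.dirDeriv z u)) := by
  have hsmall : Tendsto (fun t : ℝ => t • u) (𝓝[>] 0) (𝓝 0) := by
    have hcont : Continuous fun t : ℝ => t • u := continuous_id.smul continuous_const
    simpa using (hcont.tendsto 0).mono_left nhdsWithin_le_nhds
  refine tendsto_const_nhds.congr' ?_
  filter_upwards [hsmall.eventually (θ.eventually_val_add_eq z), self_mem_nhdsWithin]
    with t ht (htpos : 0 < t)
  rw [ht, dirDeriv_smul htpos.le, add_sub_cancel_left, mul_div_cancel_left₀ _ htpos.ne']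

variable {θ}

lemma inner_le_dirDeriv_of_mem_tcone {z v u : Ev m} (hv : v ∈ θ.subdiff z)
    (hu : u ∈ tcone θ.dom z) : ⟪v, u⟫ ≤ θ.dirDeriv z u := by
  obtain ⟨zk, c, hzk, hc, hzlim, hq⟩ := hu
  have hsmall : Tendsto (fun k => zk k - z) atTop (𝓝 0) := by
    simpa using hzlim.sub_const z
  refine le_of_tendsto_of_tendsto (tendsto_const_nhds.inner hq)
    ((θ.continuous_dirDeriv z).continuousAt.tendsto.comp hq) ?_
  filter_upwards [hsmall.eventually (θ.eventually_val_add_eq z)] with k hk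
  have hsub : ⟪v, zk k - z⟫ ≤ θ.dirDeriv z (zk k - z) := by
    have := hv.2 _ (hzk k)
    rw [add_sub_cancel] at hk
    rwa [hk, add_sub_cancel_left] at this
  simp only [Function.comp_apply, real_inner_smul_right, dirDeriv_smul (hc k)]
  exact mul_le_mul_of_nonneg_left hsub (hc k)

lemma dirDeriv_le_inner_of_mem_tcone_gph {z v u w : Ev m} (hv : v ∈ θ.subdiff z)
    (h : (u, w) ∈ tcone θ.gph (z, v)) : θ.dirDeriv z u ≤ ⟪v, u⟫ := by
  obtain ⟨s, c, hs, hc, hslim, hq⟩ := h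
  refine ciSup_le fun i => ?_
  refine le_of_tendsto_of_tendsto' (tendsto_const_nhds.inner hq.fst_nhds)
    (hslim.snd_nhds.inner hq.fst_nhds) fun k => ?_
  have hslope : ⟪θ.a i, (s k).1 - z⟫ ≤ ⟪(s k).2, (s k).1 - z⟫ := by
    have := (hs k).2 z hv.1
    rw [← neg_sub, inner_neg_right] at this
    linarith [inner_sub_le_val_sub i.2 (s k).1]
  simp only [Prod.smul_fst, Prod.fst_sub, real_inner_smul_right]
  exact mul_le_mul_of_nonneg_left hslope (hc k)

lemma mem_tcone_dom_of_mem_tcone_gph {z v u w : Ev m} (h : (u, w) ∈ tcone θ.gph (z, v)) :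
    u ∈ tcone θ.dom z :=
  tcone_mono (by rintro _ ⟨p, hp, rfl⟩; exact hp.1) z
    (map_mem_tcone_image (ContinuousLinearMap.fst ℝ (Ev m) (Ev m)) h)

lemma mem_crit_of_mem_tcone_gph {z v u w : Ev m} (hv : v ∈ θ.subdiff z)
    (h : (u, w) ∈ tcone θ.gph (z, v)) : u ∈ θ.crit z v := by
  have hu := mem_tcone_dom_of_mem_tcone_gph h
  refine ⟨hu, ?_⟩
  rw [← le_antisymm (dirDeriv_le_inner_of_mem_tcone_gph hv h)
    (inner_le_dirDeriv_of_mem_tcone hv hu)]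
  exact θ.tendsto_val_slope z u

lemma inner_nonneg_of_mem_tcone_gph {z v u w : Ev m} (hv : v ∈ θ.subdiff z)
    (h : (u, w) ∈ tcone θ.gph (z, v)) : 0 ≤ ⟪u, w⟫ :=
  inner_nonneg_of_mem_tcone_of_monotone (fun _ hp => inner_sub_nonneg_of_mem_subdiff hp hv) h

end CPWL

theorem stmt9_general {n m : ℕ} (θ : CPWL m) (f : Ev n → Ev n) (Φ : Ev n → Ev m)
    (xb : Ev n) (vb : Ev m)
    (hvb : vb ∈ Lam f Φ θ xb)
    (sosc : ∀ u : Ev n, u ≠ 0 → fderiv ℝ Φ xb u ∈ θ.crit (Φ xb) vb →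
      0 < ⟪gradxPsi f Φ xb vb u, u⟫) :
    ¬ IsCritical f Φ θ xb vb := by
  rintro ⟨ξ, hξ, w, hw, hzero⟩
  have hcurv : ⟪gradxPsi f Φ xb vb ξ, ξ⟫ = -⟪fderiv ℝ Φ xb ξ, w⟫ := by
    rw [eq_neg_of_add_eq_zero_left hzero, inner_neg_left, adjD,
      ContinuousLinearMap.adjoint_inner_left, real_inner_comm]
  have hpos := sosc ξ hξ (CPWL.mem_crit_of_mem_tcone_gph hvb.2 hw)
  have hmono := CPWL.inner_nonneg_of_mem_tcone_gph hvb.2 hw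
  linarith

/-- the second-order sufficient condition implies noncriticality of the
multiplier for the variational system. -/
theorem stmt9 {n m : ℕ} (θ : CPWL m) (f : Ev n → Ev n) (Φ : Ev n → Ev m)
    (xb : Ev n) (vb : Ev m)
    (hf : DifferentiableAt ℝ f xb) (hPhi : DifferentiableAt ℝ Φ xb)
    (hPhi2 : DifferentiableAt ℝ (fderiv ℝ Φ) xb)
    (hvb : vb ∈ Lam f Φ θ xb)
    (sosc : ∀ u : Ev n, u ≠ 0 → fderiv ℝ Φ xb u ∈ θ.crit (Φ xb) vb →
      0 < ⟪gradxPsi f Φ xb vb u, u⟫) :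
    ¬ IsCritical f Φ θ xb vb :=
  stmt9_general θ f Φ xb vb hvb sosc
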